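/- Let k_B, γ, t, T_h, T_c, I > 0 with T_h > T_c. For any real numbers ΔS and W ≥ 0 satisfying ΔS ≤ k_B · W · √I, the quantity P = (T_h - T_c)·ΔS/t - 4γW²/t² satisfies P ≤ k_B²(T_h - T_c)²·I/(16γ). -/

import Mathlib

/-! Bounding `ΔS` by the HWI inequality turns `P` into a concave quadratic `a x - 4γ x²` in
the velocity `x = W / t`, with `a = k_B (T_h - T_c) √I`; its maximum over all real `x` is
`a² / (16 γ)`. -/

theorem mul_sub_mul_sq_le_sq_div {a c : ℝ} (hc : 0 < c) (x : ℝ) :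
    a * x - c * x ^ 2 ≤ a ^ 2 / (4 * c) := by
  rw [le_div_iff₀ (by positivity)]
  nlinarith [sq_nonneg (a - 2 * c * x)]

theorem power_bound_fisher_general
    (kB γ t Th Tc I ΔS W P : ℝ) (hγ : 0 < γ) (ht : 0 < t)
    (hT : Tc < Th) (hI : 0 < I)
    (hHWI : ΔS ≤ kB * W * Real.sqrt I)
    (hP : P = (Th - Tc) * ΔS / t - 4 * γ * W ^ 2 / t ^ 2) :
    P ≤ kB ^ 2 * (Th - Tc) ^ 2 * I / (16 * γ) := by
  set a := kB * (Th - Tc) * Real.sqrt I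
  have hEntropy : (Th - Tc) * ΔS / t ≤ a * (W / t) := by
    calc (Th - Tc) * ΔS / t ≤ (Th - Tc) * (kB * W * Real.sqrt I) / t := by gcongr
      _ = a * (W / t) := by ring
  calc P = (Th - Tc) * ΔS / t - 4 * γ * (W / t) ^ 2 := by rw [hP]; ring
    _ ≤ a * (W / t) - 4 * γ * (W / t) ^ 2 := sub_le_sub_right hEntropy _
    _ ≤ a ^ 2 / (4 * (4 * γ)) := mul_sub_mul_sq_le_sq_div (by positivity) _
    _ = kB ^ 2 * (Th - Tc) ^ 2 * I / (16 * γ) := by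
      rw [mul_pow, mul_pow, Real.sq_sqrt hI.le]; ring

/-- Fisher-information power bound: if `ΔS ≤ k_B W √I` (HWI inequality), then the power
`P = (T_h - T_c)ΔS/t - 4γW²/t²` is at most `k_B²(T_h - T_c)²I/(16γ)`. -/
theorem power_bound_fisher
    (kB γ t Th Tc I ΔS W P : ℝ) (hkB : 0 < kB) (hγ : 0 < γ) (ht : 0 < t)
    (hTc : 0 < Tc) (hT : Tc < Th) (hI : 0 < I) (hW : 0 ≤ W)
    (hHWI : ΔS ≤ kB * W * Real.sqrt I)
    (hP : P = (Th - Tc) * ΔS / t - 4 * γ * W ^ 2 / t ^ 2) :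
    P ≤ kB ^ 2 * (Th - Tc) ^ 2 * I / (16 * γ) :=
  power_bound_fisher_general kB γ t Th Tc I ΔS W P hγ ht hT hI hHWI hP
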